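/- For LAV TGDs, the chase of a union of instances is isomorphic to the union of the chases: chase_Σ(D1 ∪ D2) ≅ chase_Σ(D1) ∪ chase_Σ(D2), assuming the fresh nulls introduced in chasing D1 and D2 are taken from disjoint sets. -/
import Mathlib


/-! Framework: relational instances with constants and labelled nulls,
homomorphisms, LAV TGDs, the (Skolem/oblivious) chase, conjunctive
queries, certain answers, and schema mappings for data exchange. -/

/-- Relation symbols. -/
abbrev RSym := ℕ

/-- A LAV TGD: a single body atom `bodyRel(bodyVars)`, and head atoms whose
arguments are either universal variables (`Sum.inl`, from the body) or
existentially quantified variables (`Sum.inr`). -/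
structure TGD where
  bodyRel : RSym
  bodyVars : List ℕ
  headAtoms : List (RSym × List (ℕ ⊕ ℕ))
deriving DecidableEq

/-- Values: base values (constants `Sum.inl c`, labelled nulls `Sum.inr n`),
together with Skolem terms playing the role of the fresh labelled nulls
introduced by the chase. -/
inductive CV : Type
  | base : ℕ ⊕ ℕ → CV
  | sk : TGD → ℕ → List CV → CV

/-- The constant `c` as a value. -/
def cconst (c : ℕ) : CV := CV.base (Sum.inl c)

/-- `v` is a constant. -/
def IsConst (v : CV) : Prop := ∃ c, v = cconst c

/-- A fact `r(v₁,…,vₙ)`. -/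
abbrev RFact := RSym × List CV

/-- A (possibly infinite) relational instance: a set of facts. -/
abbrev Inst := Set RFact

/-- `v` occurs in the instance `I`. -/
def valIn (I : Inst) (v : CV) : Prop := ∃ f ∈ I, v ∈ f.2

/-- Apply a value map componentwise to a fact. -/
def mapFact (h : CV → CV) (f : RFact) : RFact := (f.1, f.2.map h)

/-- `h` is a homomorphism from `I` to `J`: identity on constants and
`h(I) ⊆ J`. -/
def IsHom (h : CV → CV) (I J : Inst) : Prop :=
  (∀ v, IsConst v → h v = v) ∧ ∀ f ∈ I, mapFact h f ∈ J

/-- There exists a homomorphism from `I` to `J` (written `I →hom J`). -/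
def Hom (I J : Inst) : Prop := ∃ h, IsHom h I J

/-- Isomorphism of instances: homomorphisms in both directions that are
mutually inverse on the values occurring in the two instances. -/
def Iso (I J : Inst) : Prop :=
  ∃ h g, IsHom h I J ∧ IsHom g J I ∧ (∀ v, valIn I v → g (h v) = v) ∧
    (∀ v, valIn J v → h (g v) = v)

/-- Isomorphism up to renaming of constants: fact-preserving mutually
inverse value maps, with the identity-on-constants requirement dropped. -/
def IsoRen (I J : Inst) : Prop :=
  ∃ h g : CV → CV, (∀ f ∈ I, mapFact h f ∈ J) ∧ (∀ f ∈ J, mapFact g f ∈ I) ∧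
    (∀ v, valIn I v → g (h v) = v) ∧ (∀ v, valIn J v → h (g v) = v)

/-- Interpretation of a head argument given an assignment `σ` of the
universal variables and `τ` of the existential variables. -/
def headArg (σ τ : ℕ → CV) : ℕ ⊕ ℕ → CV := Sum.elim σ τ

/-- `(I,J)` satisfies the (source-to-target) TGD `t`: the body is evaluated
over `I` and the head over `J`. -/
def SatST (t : TGD) (I J : Inst) : Prop :=
  ∀ σ : ℕ → CV, (t.bodyRel, t.bodyVars.map σ) ∈ I →
    ∃ τ : ℕ → CV, ∀ a ∈ t.headAtoms, (a.1, a.2.map (headArg σ τ)) ∈ J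

/-- `J` satisfies the TGD `t`. -/
def Sat (t : TGD) (J : Inst) : Prop := SatST t J J

/-- Well-formedness of a TGD: every universal variable used in the head
occurs in the body. -/
def TGD.WF (t : TGD) : Prop :=
  ∀ a ∈ t.headAtoms, ∀ v : ℕ, Sum.inl v ∈ a.2 → v ∈ t.bodyVars

/-- Leveled chase membership for a set `Sg` of LAV TGDs applied to `D`:
facts of `D` have level `0`; applying a TGD to a fact of level `ℓ`
produces facts of level `ℓ+1`, the existential variables being
instantiated with fresh labelled nulls (Skolem terms). -/
inductive InChase (Sg : Finset TGD) (D : Inst) : ℕ → RFact → Prop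
  | base {f : RFact} : f ∈ D → InChase Sg D 0 f
  | step {t : TGD} {σ : ℕ → CV} {ℓ : ℕ} {a : RSym × List (ℕ ⊕ ℕ)} :
      t ∈ Sg → InChase Sg D ℓ (t.bodyRel, t.bodyVars.map σ) →
      a ∈ t.headAtoms →
      InChase Sg D (ℓ + 1)
        (a.1, a.2.map (headArg σ (fun y => CV.sk t y (t.bodyVars.map σ))))

/-- The (possibly infinite) chase of `D` with `Sg`. -/
def chase (Sg : Finset TGD) (D : Inst) : Inst := { f | ∃ ℓ, InChase Sg D ℓ f }

/-- The initial segment of the chase consisting of the facts of level at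
most `k`. -/
def chaseSeg (Sg : Finset TGD) (k : ℕ) (D : Inst) : Inst :=
  { f | ∃ ℓ ≤ k, InChase Sg D ℓ f }

/-- Maximum arity of a predicate occurrence in a TGD. -/
def TGD.maxAr (t : TGD) : ℕ :=
  max t.bodyVars.length ((t.headAtoms.map (fun a => a.2.length)).foldr max 0)

/-- Maximum arity `W` of a predicate appearing in `Sg`. -/
def maxArity (Sg : Finset TGD) : ℕ := Sg.sup TGD.maxAr

/-- The depth bound `|Σ|·(W+1)^W` for homomorphism checks into the chase. -/
def chaseBound (Sg : Finset TGD) : ℕ :=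
  Sg.card * (maxArity Sg + 1) ^ (maxArity Sg)

/-- A conjunctive query: a list of answer variables and a list of atoms
whose arguments are variables (`Sum.inl`) or constants (`Sum.inr`). -/
structure CQ where
  answerVars : List ℕ
  atoms : List (RSym × List (ℕ ⊕ ℕ))

/-- Interpretation of a query argument under an assignment `σ`. -/
def qArg (σ : ℕ → CV) : ℕ ⊕ ℕ → CV := Sum.elim σ (fun c => cconst c)

/-- Answers of the conjunctive query `q` on the instance `J`. -/
def cqAnswers (q : CQ) (J : Inst) : Set (List CV) :=
  { t | ∃ σ : ℕ → CV, (∀ a ∈ q.atoms, (a.1, a.2.map (qArg σ)) ∈ J) ∧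
      t = q.answerVars.map σ }

/-- Null-free answers `q↓(J)`: answers consisting solely of constants,
decoded as tuples of constants. -/
def cqDown (q : CQ) (J : Inst) : Set (List ℕ) :=
  { cs | cs.map cconst ∈ cqAnswers q J }

/-- A schema mapping `M = (S, T, Σst, Σt)`. -/
structure Mapping where
  S : Set RSym
  T : Set RSym
  sigST : Finset TGD
  sigT : Finset TGD

/-- A ground instance (all values are constants). -/
def Ground (I : Inst) : Prop := ∀ f ∈ I, ∀ v ∈ f.2, IsConst v

/-- A (finite, ground) source instance of the source schema of `M`. -/
def SourceInst (M : Mapping) (I : Inst) : Prop :=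
  I.Finite ∧ Ground I ∧ ∀ f ∈ I, f.1 ∈ M.S

/-- `J` is a solution for `I` under `M`. -/
def Solution (M : Mapping) (I J : Inst) : Prop :=
  (∀ f ∈ J, f.1 ∈ M.T) ∧ (∀ t ∈ M.sigST, SatST t I J) ∧ (∀ t ∈ M.sigT, Sat t J)

/-- `J` is a universal solution for `I` under `M`. -/
def Universal (M : Mapping) (I J : Inst) : Prop :=
  Solution M I J ∧ ∀ J', Solution M I J' → Hom J J'

/-- Certain answers of `q` on `I` under `M`: constant tuples that are
answers on every solution. -/
def certain (q : CQ) (I : Inst) (M : Mapping) : Set (List ℕ) :=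
  { cs | ∀ J, Solution M I J → cs.map cconst ∈ cqAnswers q J }

/-- Containment of schema mappings w.r.t. certain answers of CQs. -/
def Contains (M M' : Mapping) : Prop :=
  ∀ I, SourceInst M I → ∀ q : CQ, certain q I M ⊆ certain q I M'

/-- Equivalence of schema mappings (mutual containment). -/
def MEquiv (M M' : Mapping) : Prop := Contains M M' ∧ Contains M' M

/-- Well-formed schema mapping: source and target schemas are disjoint,
s-t TGDs go from `S` to `T`, target TGDs are over `T`, and all TGDs are
well-formed. -/
def Mapping.WF (M : Mapping) : Prop :=
  Disjoint M.S M.T ∧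
  (∀ t ∈ M.sigST, t.WF ∧ t.bodyRel ∈ M.S ∧ ∀ a ∈ t.headAtoms, a.1 ∈ M.T) ∧
  (∀ t ∈ M.sigT, t.WF ∧ t.bodyRel ∈ M.T ∧ ∀ a ∈ t.headAtoms, a.1 ∈ M.T)

/-- The dummy instances `D_M` for `M`: for each relation `r` of arity `n`
appearing in the body of some s-t TGD, all single-fact instances
`{r(z₁,…,zₙ)}` where the `zᵢ` are fresh constants, possibly repeated
(one instance per equality pattern). -/
def dummies (M : Mapping) : Set Inst :=
  { D | ∃ t ∈ M.sigST, ∃ zs : List ℕ, zs.length = t.bodyVars.length ∧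
      (∀ z ∈ zs, z < t.bodyVars.length) ∧
      D = {(t.bodyRel, zs.map cconst)} }
lemma inChase_mono {Sg : Finset TGD} {D D' : Inst} (hDD : D ⊆ D') {ℓ f}
    (h : InChase Sg D ℓ f) : InChase Sg D' ℓ f := by
  induction h with
  | base hf => exact InChase.base (hDD hf)
  | step ht _ ha ih => exact InChase.step ht ih ha

lemma chase_union_eq (Sg : Finset TGD) (D1 D2 : Inst) :
    chase Sg (D1 ∪ D2) = chase Sg D1 ∪ chase Sg D2 := by
  ext f
  constructor
  · rintro ⟨ℓ, h⟩
    induction h with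
    | base hf =>
      rcases hf with hf | hf
      · exact Or.inl ⟨0, InChase.base hf⟩
      · exact Or.inr ⟨0, InChase.base hf⟩
    | step ht _ ha ih =>
      rcases ih with ⟨ℓ', h'⟩ | ⟨ℓ', h'⟩
      · exact Or.inl ⟨ℓ' + 1, InChase.step ht h' ha⟩
      · exact Or.inr ⟨ℓ' + 1, InChase.step ht h' ha⟩
  · rintro (⟨ℓ, h⟩ | ⟨ℓ, h⟩)
    · exact ⟨ℓ, inChase_mono Set.subset_union_left h⟩
    · exact ⟨ℓ, inChase_mono Set.subset_union_right h⟩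

/-- for LAV TGDs, the chase of a union of instances is
isomorphic to the union of the chases (fresh nulls taken disjointly). -/
theorem chase_union_iso (Sg : Finset TGD) (D1 D2 : Inst) :
    Iso (chase Sg (D1 ∪ D2)) (chase Sg D1 ∪ chase Sg D2) := by
  refine ⟨id, id, ⟨fun v _ => rfl, ?_⟩, ⟨fun v _ => rfl, ?_⟩, fun v _ => rfl,
    fun v _ => rfl⟩ <;>
  · intro f hf
    simp only [mapFact, List.map_id]
    rw [chase_union_eq] at *
    exact hf
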